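/- arXiv:1107.3320 — 3 statements merged into one kernel-verified Lean document; each statement's English description precedes it below -/
import Mathlib

section
/- Given toric monoid homomorphisms φ₁ : σ₁ → σ and φ₂ : σ₂ → σ, the fiber product σ₁ ×_σ σ₂ = {(v,w) ∈ σ₁ × σ₂ : φ₁(v) = φ₂(w)} is again a toric monoid; i.e. it is finitely generated, sharp, integral, saturated, and torsion-free. -/
namespace Toric

variable {G : Type*} [AddCommGroup G]

/-- A toric monoid inside the (torsion-free, in applications) ambient group
`G`: finitely generated, sharp and saturated (cancellativity — integrality —
and torsion-freeness are automatic for submonoids of a torsion-free group). -/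
structure IsToric (σ : AddSubmonoid G) : Prop where
  fg : σ.FG
  sharp : ∀ v ∈ σ, -v ∈ σ → v = 0
  saturated : ∀ v ∈ AddSubgroup.closure (σ : Set G), ∀ k : ℕ, 0 < k → k • v ∈ σ → v ∈ σ

/-- `τ` is a face of `σ`. -/
def IsFace (τ σ : AddSubmonoid G) : Prop :=
  τ ≤ σ ∧ ∀ v w : G, v ∈ σ → w ∈ σ → v + w ∈ τ → v ∈ τ ∧ w ∈ τ

/-- A smooth toric monoid: freely generated by linearly independent elements. -/
def IsSmooth (σ : AddSubmonoid G) : Prop :=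
  ∃ (k : ℕ) (b : Fin k → G), LinearIndependent ℤ b ∧
    σ = AddSubmonoid.closure (Set.range b)

variable {G₁ G₂ H : Type*} [AddCommGroup G₁] [AddCommGroup G₂] [AddCommGroup H]

/-- The fiber product `σ₁ ×_σ σ₂ = {(v,w) : φ₁ v = φ₂ w}` of two monoid
homomorphisms, as a submonoid of `G₁ × G₂`. -/
def fiberProd (σ₁ : AddSubmonoid G₁) (σ₂ : AddSubmonoid G₂) (σ : AddSubmonoid H)
    (φ₁ : σ₁ →+ σ) (φ₂ : σ₂ →+ σ) : AddSubmonoid (G₁ × G₂) where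
  carrier := {p | ∃ (h₁ : p.1 ∈ σ₁) (h₂ : p.2 ∈ σ₂), φ₁ ⟨p.1, h₁⟩ = φ₂ ⟨p.2, h₂⟩}
  zero_mem' := by
    refine ⟨σ₁.zero_mem, σ₂.zero_mem, ?_⟩
    have e₁ : (⟨(0 : G₁ × G₂).1, σ₁.zero_mem⟩ : σ₁) = 0 := rfl
    have e₂ : (⟨(0 : G₁ × G₂).2, σ₂.zero_mem⟩ : σ₂) = 0 := rfl
    rw [e₁, e₂, map_zero, map_zero]
  add_mem' := by
    rintro p q ⟨h₁, h₂, hp⟩ ⟨g₁, g₂, hq⟩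
    refine ⟨σ₁.add_mem h₁ g₁, σ₂.add_mem h₂ g₂, ?_⟩
    have e₁ : (⟨(p + q).1, σ₁.add_mem h₁ g₁⟩ : σ₁) = ⟨p.1, h₁⟩ + ⟨q.1, g₁⟩ := rfl
    have e₂ : (⟨(p + q).2, σ₂.add_mem h₂ g₂⟩ : σ₂) = ⟨p.2, h₂⟩ + ⟨q.2, g₂⟩ := rfl
    rw [e₁, e₂, map_add, map_add, hp, hq]

end Toric

/-! The fiber product is the image in `G₁ × G₂` of the equalizer of `φ₁ ∘ fst` and `φ₂ ∘ snd`
on `σ₁ × σ₂`. Pulling that equalizer back along a surjection `ℕ^k → σ₁ × σ₂` lands in Gordan's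
lemma, which gives finite generation. Sharpness is inherited from `σ₁ × σ₂`, and saturation
follows componentwise, since `k • φ₁ v = k • φ₂ w` forces `φ₁ v = φ₂ w` in a torsion-free group. -/

theorem AddSubmonoid.fg_eqLocusM_of_fg {M N : Type*} [AddCommMonoid M] [AddMonoid.FG M]
    [AddMonoid N] [IsCancelAdd N] (f g : M →+ N) : (f.eqLocusM g).FG := by
  have : Module.Finite ℕ M := Module.Finite.iff_addMonoid_fg.mpr ‹_›
  obtain ⟨k, π, hπ⟩ := Module.Finite.exists_fin' ℕ M
  rw [← AddSubmonoid.map_comap_eq_of_surjective (f := π.toAddMonoidHom) hπ (f.eqLocusM g)]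
  exact (AddSubmonoid.fg_eqLocusM (f.comp π.toAddMonoidHom) (g.comp π.toAddMonoidHom)).map _

namespace Toric

variable {G₁ G₂ H : Type*} [AddCommGroup G₁] [AddCommGroup G₂] [AddCommGroup H]
  {σ₁ : AddSubmonoid G₁} {σ₂ : AddSubmonoid G₂} {σ : AddSubmonoid H}

theorem fiberProd_eq_map_eqLocusM (φ₁ : σ₁ →+ σ) (φ₂ : σ₂ →+ σ) :
    fiberProd σ₁ σ₂ σ φ₁ φ₂ =
      ((φ₁.comp (AddMonoidHom.fst σ₁ σ₂)).eqLocusM (φ₂.comp (AddMonoidHom.snd σ₁ σ₂))).map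
        (σ₁.subtype.prodMap σ₂.subtype) := by
  ext p
  constructor
  · rintro ⟨h₁, h₂, hp⟩
    exact ⟨(⟨p.1, h₁⟩, ⟨p.2, h₂⟩), hp, rfl⟩
  · rintro ⟨⟨v, w⟩, hvw, rfl⟩
    exact ⟨v.2, w.2, hvw⟩

theorem fiberProd_le_prod (φ₁ : σ₁ →+ σ) (φ₂ : σ₂ →+ σ) :
    fiberProd σ₁ σ₂ σ φ₁ φ₂ ≤ σ₁.prod σ₂ :=
  fun _ ⟨h₁, h₂, _⟩ => ⟨h₁, h₂⟩

theorem fiberProd_fg (h₁ : σ₁.FG) (h₂ : σ₂.FG) (φ₁ : σ₁ →+ σ) (φ₂ : σ₂ →+ σ) :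
    (fiberProd σ₁ σ₂ σ φ₁ φ₂).FG := by
  have : AddMonoid.FG σ₁ := (AddMonoid.fg_iff_addSubmonoid_fg σ₁).mpr h₁
  have : AddMonoid.FG σ₂ := (AddMonoid.fg_iff_addSubmonoid_fg σ₂).mpr h₂
  rw [fiberProd_eq_map_eqLocusM]
  exact (AddSubmonoid.fg_eqLocusM_of_fg _ _).map _

theorem fiberProd_sharp (h₁ : ∀ v ∈ σ₁, -v ∈ σ₁ → v = 0) (h₂ : ∀ v ∈ σ₂, -v ∈ σ₂ → v = 0)
    (φ₁ : σ₁ →+ σ) (φ₂ : σ₂ →+ σ) :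
    ∀ p ∈ fiberProd σ₁ σ₂ σ φ₁ φ₂, -p ∈ fiberProd σ₁ σ₂ σ φ₁ φ₂ → p = 0 := by
  intro p hp hnp
  obtain ⟨hp₁, hp₂⟩ := fiberProd_le_prod φ₁ φ₂ hp
  obtain ⟨hnp₁, hnp₂⟩ := fiberProd_le_prod φ₁ φ₂ hnp
  exact Prod.ext (h₁ p.1 hp₁ hnp₁) (h₂ p.2 hp₂ hnp₂)

theorem closure_fiberProd_le_prod (φ₁ : σ₁ →+ σ) (φ₂ : σ₂ →+ σ) :
    AddSubgroup.closure (fiberProd σ₁ σ₂ σ φ₁ φ₂ : Set (G₁ × G₂)) ≤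
      (AddSubgroup.closure (σ₁ : Set G₁)).prod (AddSubgroup.closure (σ₂ : Set G₂)) := by
  rw [AddSubgroup.closure_le]
  intro p hp
  obtain ⟨hp₁, hp₂⟩ := fiberProd_le_prod φ₁ φ₂ hp
  exact ⟨AddSubgroup.subset_closure hp₁, AddSubgroup.subset_closure hp₂⟩

theorem fiberProd_saturated [IsAddTorsionFree H]
    (h₁ : ∀ v ∈ AddSubgroup.closure (σ₁ : Set G₁), ∀ k : ℕ, 0 < k → k • v ∈ σ₁ → v ∈ σ₁)
    (h₂ : ∀ v ∈ AddSubgroup.closure (σ₂ : Set G₂), ∀ k : ℕ, 0 < k → k • v ∈ σ₂ → v ∈ σ₂)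
    (φ₁ : σ₁ →+ σ) (φ₂ : σ₂ →+ σ) :
    ∀ p ∈ AddSubgroup.closure (fiberProd σ₁ σ₂ σ φ₁ φ₂ : Set (G₁ × G₂)), ∀ k : ℕ, 0 < k →
      k • p ∈ fiberProd σ₁ σ₂ σ φ₁ φ₂ → p ∈ fiberProd σ₁ σ₂ σ φ₁ φ₂ := by
  rintro p hp k hk ⟨hkp₁, hkp₂, hkp⟩
  obtain ⟨hp₁, hp₂⟩ := closure_fiberProd_le_prod φ₁ φ₂ hp
  have hv : p.1 ∈ σ₁ := h₁ p.1 hp₁ k hk hkp₁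
  have hw : p.2 ∈ σ₂ := h₂ p.2 hp₂ k hk hkp₂
  have hkφ : k • φ₁ ⟨p.1, hv⟩ = k • φ₂ ⟨p.2, hw⟩ := by
    rw [← map_nsmul, ← map_nsmul]
    exact hkp
  refine ⟨hv, hw, Subtype.ext (IsAddTorsionFree.nsmul_right_injective hk.ne' ?_)⟩
  simpa using congrArg Subtype.val hkφ

theorem fiberProd_isToric_general {n₁ n₂ m : ℕ}
    (σ₁ : AddSubmonoid (Fin n₁ → ℤ)) (σ₂ : AddSubmonoid (Fin n₂ → ℤ))
    (σ : AddSubmonoid (Fin m → ℤ))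
    (hσ₁ : IsToric σ₁) (hσ₂ : IsToric σ₂)
    (φ₁ : σ₁ →+ σ) (φ₂ : σ₂ →+ σ) :
    IsToric (fiberProd σ₁ σ₂ σ φ₁ φ₂) :=
  ⟨fiberProd_fg hσ₁.fg hσ₂.fg φ₁ φ₂, fiberProd_sharp hσ₁.sharp hσ₂.sharp φ₁ φ₂,
    fiberProd_saturated hσ₁.saturated hσ₂.saturated φ₁ φ₂⟩

/-- The fiber product of two toric monoid homomorphisms
`φᵢ : σᵢ → σ` is again a toric monoid. -/
theorem fiberProd_isToric {n₁ n₂ m : ℕ}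
    (σ₁ : AddSubmonoid (Fin n₁ → ℤ)) (σ₂ : AddSubmonoid (Fin n₂ → ℤ))
    (σ : AddSubmonoid (Fin m → ℤ))
    (hσ₁ : IsToric σ₁) (hσ₂ : IsToric σ₂) (hσ : IsToric σ)
    (φ₁ : σ₁ →+ σ) (φ₂ : σ₂ →+ σ) :
    IsToric (fiberProd σ₁ σ₂ σ φ₁ φ₂) :=
  fiberProd_isToric_general σ₁ σ₂ σ hσ₁ hσ₂ φ₁ φ₂

end Toric
end

section
/- For toric monoid homomorphisms φᵢ : σᵢ → σ (i=1,2), every face of the fiber product σ₁ ×_σ σ₂ is of the form τ₁ ×_σ τ₂ where τᵢ ≤ σᵢ are faces with the property that the smallest face of σ containing φ₁(τ₁) equals the smallest face containing φ₂(τ₂). Moreover each face of σ₁ ×_σ σ₂ arises from a unique such pair (τ₁, τ₂) equal to the minimal pair with τ₁ × τ₂ containing it. -/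
namespace Toric

/-- The smallest face of `σ₁` containing the first projection of `F`. -/
def faceHull₁ {G₁ G₂ : Type*} [AddCommGroup G₁] [AddCommGroup G₂]
    (σ₁ : AddSubmonoid G₁) (F : AddSubmonoid (G₁ × G₂)) : AddSubmonoid G₁ where
  carrier := {v | v ∈ σ₁ ∧ ∃ w ∈ σ₁, ∃ p ∈ F, v + w = p.1}
  zero_mem' := ⟨σ₁.zero_mem, 0, σ₁.zero_mem, 0, F.zero_mem, by simp⟩
  add_mem' := by
    rintro a b ⟨ha, w, hw, p, hp, hawp⟩ ⟨hb, x, hx, q, hq, hbxq⟩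
    refine ⟨σ₁.add_mem ha hb, w + x, σ₁.add_mem hw hx, p + q, F.add_mem hp hq, ?_⟩
    have h : a + b + (w + x) = (a + w) + (b + x) := by abel
    rw [h, hawp, hbxq]; rfl

/-- The smallest face of `σ₂` containing the second projection of `F`. -/
def faceHull₂ {G₁ G₂ : Type*} [AddCommGroup G₁] [AddCommGroup G₂]
    (σ₂ : AddSubmonoid G₂) (F : AddSubmonoid (G₁ × G₂)) : AddSubmonoid G₂ where
  carrier := {v | v ∈ σ₂ ∧ ∃ w ∈ σ₂, ∃ p ∈ F, v + w = p.2}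
  zero_mem' := ⟨σ₂.zero_mem, 0, σ₂.zero_mem, 0, F.zero_mem, by simp⟩
  add_mem' := by
    rintro a b ⟨ha, w, hw, p, hp, hawp⟩ ⟨hb, x, hx, q, hq, hbxq⟩
    refine ⟨σ₂.add_mem ha hb, w + x, σ₂.add_mem hw hx, p + q, F.add_mem hp hq, ?_⟩
    have h : a + b + (w + x) = (a + w) + (b + x) := by abel
    rw [h, hawp, hbxq]; rfl

/-- Every face of the fiber product `σ₁ ×_σ σ₂` is of the
form `τ₁ ×_σ τ₂` for a unique pair of faces `τᵢ ≤ σᵢ` such that the smallest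
face of `σ` containing `φ₁(τ₁)` equals the smallest face containing
`φ₂(τ₂)` (expressed below by: the faces of `σ` containing `φ₁(τ₁)` are
exactly those containing `φ₂(τ₂)`), the pair being the minimal one with
`τ₁ × τ₂` containing the given face. -/
theorem fiberProd_face_structure {n₁ n₂ m : ℕ}
    (σ₁ : AddSubmonoid (Fin n₁ → ℤ)) (σ₂ : AddSubmonoid (Fin n₂ → ℤ))
    (σ : AddSubmonoid (Fin m → ℤ))
    (hσ₁ : IsToric σ₁) (hσ₂ : IsToric σ₂) (hσ : IsToric σ)
    (φ₁ : σ₁ →+ σ) (φ₂ : σ₂ →+ σ)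
    (F : AddSubmonoid ((Fin n₁ → ℤ) × (Fin n₂ → ℤ)))
    (hF : IsFace F (fiberProd σ₁ σ₂ σ φ₁ φ₂)) :
    ∃! p : AddSubmonoid (Fin n₁ → ℤ) × AddSubmonoid (Fin n₂ → ℤ),
      IsFace p.1 σ₁ ∧ IsFace p.2 σ₂ ∧
      (∀ ρ, IsFace ρ σ →
        ((∀ v, ∀ hv : v ∈ σ₁, v ∈ p.1 → ((φ₁ ⟨v, hv⟩ : σ) : Fin m → ℤ) ∈ ρ) ↔
         (∀ w, ∀ hw : w ∈ σ₂, w ∈ p.2 → ((φ₂ ⟨w, hw⟩ : σ) : Fin m → ℤ) ∈ ρ))) ∧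
      F ≤ p.1.prod p.2 ∧
      (∀ q : AddSubmonoid (Fin n₁ → ℤ) × AddSubmonoid (Fin n₂ → ℤ),
        IsFace q.1 σ₁ → IsFace q.2 σ₂ → F ≤ q.1.prod q.2 →
        p.1.prod p.2 ≤ q.1.prod q.2) ∧
      F = fiberProd σ₁ σ₂ σ φ₁ φ₂ ⊓ p.1.prod p.2 := by
  classical
  obtain ⟨hFP, hFface⟩ := hF
  set P := fiberProd σ₁ σ₂ σ φ₁ φ₂ with hPdef
  set τ₁ := faceHull₁ σ₁ F with hτ₁def
  set τ₂ := faceHull₂ σ₂ F with hτ₂def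
  -- membership characterizations
  have memτ₁ : ∀ v, v ∈ τ₁ ↔ v ∈ σ₁ ∧ ∃ w ∈ σ₁, ∃ p ∈ F, v + w = p.1 := fun _ => Iff.rfl
  have memτ₂ : ∀ v, v ∈ τ₂ ↔ v ∈ σ₂ ∧ ∃ w ∈ σ₂, ∃ p ∈ F, v + w = p.2 := fun _ => Iff.rfl
  have memP : ∀ p : (Fin n₁ → ℤ) × (Fin n₂ → ℤ),
      p ∈ P ↔ ∃ (h₁ : p.1 ∈ σ₁) (h₂ : p.2 ∈ σ₂), φ₁ ⟨p.1, h₁⟩ = φ₂ ⟨p.2, h₂⟩ :=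
    fun _ => Iff.rfl
  -- additivity of the ambient-valued maps
  have hadd₁ : ∀ (v w : Fin n₁ → ℤ) (hv : v ∈ σ₁) (hw : w ∈ σ₁),
      ((φ₁ ⟨v + w, σ₁.add_mem hv hw⟩ : σ) : Fin m → ℤ)
        = ((φ₁ ⟨v, hv⟩ : σ) : Fin m → ℤ) + ((φ₁ ⟨w, hw⟩ : σ) : Fin m → ℤ) := by
    intro v w hv hw
    have : (⟨v + w, σ₁.add_mem hv hw⟩ : σ₁) = ⟨v, hv⟩ + ⟨w, hw⟩ := rfl
    rw [this, map_add]; rfl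
  have hadd₂ : ∀ (v w : Fin n₂ → ℤ) (hv : v ∈ σ₂) (hw : w ∈ σ₂),
      ((φ₂ ⟨v + w, σ₂.add_mem hv hw⟩ : σ) : Fin m → ℤ)
        = ((φ₂ ⟨v, hv⟩ : σ) : Fin m → ℤ) + ((φ₂ ⟨w, hw⟩ : σ) : Fin m → ℤ) := by
    intro v w hv hw
    have : (⟨v + w, σ₂.add_mem hv hw⟩ : σ₂) = ⟨v, hv⟩ + ⟨w, hw⟩ := rfl
    rw [this, map_add]; rfl
  -- projections of F lie in the hulls
  have hproj₁ : ∀ p ∈ F, p.1 ∈ τ₁ := by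
    intro p hp
    obtain ⟨h₁, h₂, -⟩ := (memP p).1 (hFP hp)
    exact ⟨h₁, 0, σ₁.zero_mem, p, hp, add_zero _⟩
  have hproj₂ : ∀ p ∈ F, p.2 ∈ τ₂ := by
    intro p hp
    obtain ⟨h₁, h₂, -⟩ := (memP p).1 (hFP hp)
    exact ⟨h₂, 0, σ₂.zero_mem, p, hp, add_zero _⟩
  -- the hulls are faces
  have hface₁ : IsFace τ₁ σ₁ := by
    refine ⟨fun v hv => hv.1, fun v w hv hw hvw => ?_⟩
    obtain ⟨-, x, hx, p, hp, hsum⟩ := hvw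
    constructor
    · exact ⟨hv, w + x, σ₁.add_mem hw hx, p, hp, by rw [← hsum]; abel⟩
    · exact ⟨hw, v + x, σ₁.add_mem hv hx, p, hp, by rw [← hsum]; abel⟩
  have hface₂ : IsFace τ₂ σ₂ := by
    refine ⟨fun v hv => hv.1, fun v w hv hw hvw => ?_⟩
    obtain ⟨-, x, hx, p, hp, hsum⟩ := hvw
    constructor
    · exact ⟨hv, w + x, σ₂.add_mem hw hx, p, hp, by rw [← hsum]; abel⟩
    · exact ⟨hw, v + x, σ₂.add_mem hv hx, p, hp, by rw [← hsum]; abel⟩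
  -- minimality of the hulls among faces containing the projections
  have hmin₁ : ∀ q : AddSubmonoid (Fin n₁ → ℤ), IsFace q σ₁ →
      (∀ p ∈ F, p.1 ∈ q) → τ₁ ≤ q := by
    rintro q ⟨-, hqface⟩ hq v ⟨hv, w, hw, p, hp, hsum⟩
    exact (hqface v w hv hw (hsum ▸ hq p hp)).1
  have hmin₂ : ∀ q : AddSubmonoid (Fin n₂ → ℤ), IsFace q σ₂ →
      (∀ p ∈ F, p.2 ∈ q) → τ₂ ≤ q := by
    rintro q ⟨-, hqface⟩ hq v ⟨hv, w, hw, p, hp, hsum⟩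
    exact (hqface v w hv hw (hsum ▸ hq p hp)).1
  -- F is contained in the product
  have hFle : F ≤ τ₁.prod τ₂ := fun p hp =>
    AddSubmonoid.mem_prod.2 ⟨hproj₁ p hp, hproj₂ p hp⟩
  refine ⟨(τ₁, τ₂), ⟨hface₁, hface₂, ?_, hFle, ?_, ?_⟩, ?_⟩
  · -- the ρ-condition
    rintro ρ ⟨hρle, hρface⟩
    constructor
    · intro h w hw hwτ
      obtain ⟨-, w', hw', q, hq, hsum⟩ := hwτ
      obtain ⟨g₁, g₂, hqeq⟩ := (memP q).1 (hFP hq)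
      have hval : ((φ₂ ⟨w + w', σ₂.add_mem hw hw'⟩ : σ) : Fin m → ℤ)
          = ((φ₁ ⟨q.1, g₁⟩ : σ) : Fin m → ℤ) := by
        have : (⟨w + w', σ₂.add_mem hw hw'⟩ : σ₂) = ⟨q.2, g₂⟩ := Subtype.ext hsum
        rw [this, ← hqeq]
      have hmem : ((φ₂ ⟨w, hw⟩ : σ) : Fin m → ℤ) + ((φ₂ ⟨w', hw'⟩ : σ) : Fin m → ℤ) ∈ ρ := by
        rw [← hadd₂ w w' hw hw', hval]
        exact h q.1 g₁ (hproj₁ q hq)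
      exact (hρface _ _ (φ₂ ⟨w, hw⟩).2 (φ₂ ⟨w', hw'⟩).2 hmem).1
    · intro h v hv hvτ
      obtain ⟨-, v', hv', q, hq, hsum⟩ := hvτ
      obtain ⟨g₁, g₂, hqeq⟩ := (memP q).1 (hFP hq)
      have hval : ((φ₁ ⟨v + v', σ₁.add_mem hv hv'⟩ : σ) : Fin m → ℤ)
          = ((φ₂ ⟨q.2, g₂⟩ : σ) : Fin m → ℤ) := by
        have : (⟨v + v', σ₁.add_mem hv hv'⟩ : σ₁) = ⟨q.1, g₁⟩ := Subtype.ext hsum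
        rw [this, hqeq]
      have hmem : ((φ₁ ⟨v, hv⟩ : σ) : Fin m → ℤ) + ((φ₁ ⟨v', hv'⟩ : σ) : Fin m → ℤ) ∈ ρ := by
        rw [← hadd₁ v v' hv hv', hval]
        exact h q.2 g₂ (hproj₂ q hq)
      exact (hρface _ _ (φ₁ ⟨v, hv⟩).2 (φ₁ ⟨v', hv'⟩).2 hmem).1
  · -- minimality among pairs of faces whose product contains F
    intro q hq₁ hq₂ hle
    have h₁ : τ₁ ≤ q.1 := hmin₁ q.1 hq₁ fun p hp => (AddSubmonoid.mem_prod.1 (hle hp)).1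
    have h₂ : τ₂ ≤ q.2 := hmin₂ q.2 hq₂ fun p hp => (AddSubmonoid.mem_prod.1 (hle hp)).2
    intro p hp
    obtain ⟨ha, hb⟩ := AddSubmonoid.mem_prod.1 hp
    exact AddSubmonoid.mem_prod.2 ⟨h₁ ha, h₂ hb⟩
  · -- F = P ⊓ τ₁ × τ₂
    refine le_antisymm (le_inf hFP hFle) ?_
    rintro p ⟨hpP, hpprod⟩
    obtain ⟨hp₁, hp₂⟩ := AddSubmonoid.mem_prod.1 hpprod
    obtain ⟨hv, v', hv', q, hq, hsum₁⟩ := hp₁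
    obtain ⟨hw, w', hw', r, hr, hsum₂⟩ := hp₂
    obtain ⟨hq₁, hq₂, hqeq⟩ := (memP q).1 (hFP hq)
    obtain ⟨hr₁, hr₂, hreq⟩ := (memP r).1 (hFP hr)
    obtain ⟨hpv, hpw, hpeq⟩ := (memP p).1 hpP
    -- the complementary element s = (v' + r.1, q.2 + w')
    have hs₁ : v' + r.1 ∈ σ₁ := σ₁.add_mem hv' hr₁
    have hs₂ : q.2 + w' ∈ σ₂ := σ₂.add_mem hq₂ hw'
    have hsP : ((v' + r.1, q.2 + w') : (Fin n₁ → ℤ) × (Fin n₂ → ℤ)) ∈ P := by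
      refine (memP _).2 ⟨hs₁, hs₂, Subtype.ext ?_⟩
      have e0 : ((φ₁ ⟨p.1, hpv⟩ : σ) : Fin m → ℤ) = ((φ₂ ⟨p.2, hpw⟩ : σ) : Fin m → ℤ) :=
        congrArg _ hpeq
      have e1 : ((φ₁ ⟨p.1, hpv⟩ : σ) : Fin m → ℤ) + ((φ₁ ⟨v', hv'⟩ : σ) : Fin m → ℤ)
          = ((φ₁ ⟨q.1, hq₁⟩ : σ) : Fin m → ℤ) := by
        rw [← hadd₁ p.1 v' hpv hv']
        exact congrArg (fun a : σ₁ => ((φ₁ a : σ) : Fin m → ℤ)) (Subtype.ext hsum₁)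
      have e2 : ((φ₁ ⟨q.1, hq₁⟩ : σ) : Fin m → ℤ) = ((φ₂ ⟨q.2, hq₂⟩ : σ) : Fin m → ℤ) :=
        congrArg _ hqeq
      have e3 : ((φ₂ ⟨p.2, hpw⟩ : σ) : Fin m → ℤ) + ((φ₂ ⟨w', hw'⟩ : σ) : Fin m → ℤ)
          = ((φ₂ ⟨r.2, hr₂⟩ : σ) : Fin m → ℤ) := by
        rw [← hadd₂ p.2 w' hpw hw']
        exact congrArg (fun a : σ₂ => ((φ₂ a : σ) : Fin m → ℤ)) (Subtype.ext hsum₂)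
      have e4 : ((φ₁ ⟨r.1, hr₁⟩ : σ) : Fin m → ℤ) = ((φ₂ ⟨r.2, hr₂⟩ : σ) : Fin m → ℤ) :=
        congrArg _ hreq
      have e5 : ((φ₁ ⟨v' + r.1, hs₁⟩ : σ) : Fin m → ℤ)
          = ((φ₁ ⟨v', hv'⟩ : σ) : Fin m → ℤ) + ((φ₁ ⟨r.1, hr₁⟩ : σ) : Fin m → ℤ) :=
        hadd₁ v' r.1 hv' hr₁
      have e6 : ((φ₂ ⟨q.2 + w', hs₂⟩ : σ) : Fin m → ℤ)
          = ((φ₂ ⟨q.2, hq₂⟩ : σ) : Fin m → ℤ) + ((φ₂ ⟨w', hw'⟩ : σ) : Fin m → ℤ) :=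
        hadd₂ q.2 w' hq₂ hw'
      show ((φ₁ ⟨v' + r.1, hs₁⟩ : σ) : Fin m → ℤ) = ((φ₂ ⟨q.2 + w', hs₂⟩ : σ) : Fin m → ℤ)
      rw [e5, e6]
      linear_combination -e0 + e1 + e2 - e3 + e4
    have hsumF : p + (v' + r.1, q.2 + w') ∈ F := by
      have : p + ((v' + r.1, q.2 + w') : (Fin n₁ → ℤ) × (Fin n₂ → ℤ)) = q + r := by
        have h1 : p.1 + (v' + r.1) = q.1 + r.1 := by rw [← hsum₁]; abel
        have h2 : p.2 + (q.2 + w') = q.2 + r.2 := by rw [← hsum₂]; abel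
        exact Prod.ext h1 h2
      rw [this]
      exact F.add_mem hq hr
    exact (hFface p (v' + r.1, q.2 + w') hpP hsP hsumF).1
  · -- uniqueness
    rintro ⟨q₁, q₂⟩ ⟨hq₁, hq₂, -, hqle, hqmin, -⟩
    have h₁ : AddSubmonoid.prod q₁ q₂ ≤ τ₁.prod τ₂ := hqmin (τ₁, τ₂) hface₁ hface₂ hFle
    have h₂ : τ₁.prod τ₂ ≤ AddSubmonoid.prod q₁ q₂ := by
      have ha : τ₁ ≤ q₁ := hmin₁ q₁ hq₁ fun p hp => (AddSubmonoid.mem_prod.1 (hqle hp)).1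
      have hb : τ₂ ≤ q₂ := hmin₂ q₂ hq₂ fun p hp => (AddSubmonoid.mem_prod.1 (hqle hp)).2
      intro p hp
      obtain ⟨hx, hy⟩ := AddSubmonoid.mem_prod.1 hp
      exact AddSubmonoid.mem_prod.2 ⟨ha hx, hb hy⟩
    have hprod : AddSubmonoid.prod q₁ q₂ = τ₁.prod τ₂ := le_antisymm h₁ h₂
    have hc₁ : q₁ = τ₁ := by
      ext v
      have h := SetLike.ext_iff.1 hprod ((v, 0) : (Fin n₁ → ℤ) × (Fin n₂ → ℤ))
      simpa [AddSubmonoid.mem_prod, q₂.zero_mem, τ₂.zero_mem] using h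
    have hc₂ : q₂ = τ₂ := by
      ext v
      have h := SetLike.ext_iff.1 hprod ((0, v) : (Fin n₁ → ℤ) × (Fin n₂ → ℤ))
      simpa [AddSubmonoid.mem_prod, q₁.zero_mem, τ₁.zero_mem] using h
    exact Prod.ext hc₁ hc₂

end Toric
end

section
/- The fiber product of two smooth toric monoids over a third toric monoid need not be smooth: for φ₁ = φ₂ : ℤ≥0² → ℤ≥0 given by (m,n) ↦ m+n, the fiber product ℤ≥0² ×_{ℤ≥0} ℤ≥0² is a toric monoid that is not freely generated (it requires four generators but has rank 3). -/
namespace Toric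

/-- The smooth monoid `ℤ≥0²` inside `ℤ²`. -/
def Zp2 : AddSubmonoid (Fin 2 → ℤ) where
  carrier := {v | ∀ i, 0 ≤ v i}
  zero_mem' := by intro i; simp
  add_mem' := by intro a b ha hb i; simpa using add_nonneg (ha i) (hb i)

/-- The smooth monoid `ℤ≥0` inside `ℤ`. -/
def Zp1 : AddSubmonoid ℤ where
  carrier := {m | 0 ≤ m}
  zero_mem' := by show (0:ℤ) ≤ 0; exact le_refl 0
  add_mem' := by intro a b ha hb; exact add_nonneg (show (0:ℤ) ≤ a from ha) (show (0:ℤ) ≤ b from hb)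

/-- The homomorphism `ℤ≥0² → ℤ≥0`, `(m,n) ↦ m + n`. -/
def phiSum : Zp2 →+ Zp1 where
  toFun v := ⟨v.1 0 + v.1 1, add_nonneg (v.2 0) (v.2 1)⟩
  map_zero' := by
    apply Subtype.ext
    show ((0 : Zp2) : Fin 2 → ℤ) 0 + ((0 : Zp2) : Fin 2 → ℤ) 1 = 0
    simp
  map_add' := by
    intro a b
    apply Subtype.ext
    show ((a + b : Zp2) : Fin 2 → ℤ) 0 + ((a + b : Zp2) : Fin 2 → ℤ) 1 = _
    simp
    ring

end Toric

theorem AddSubmonoid.mem_of_mem_closure_of_indecomposable {M : Type*} [AddMonoid M]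
    {S : Set M} {x : M} (hx : x ∈ AddSubmonoid.closure S) (hx0 : x ≠ 0)
    (hindec : ∀ y ∈ AddSubmonoid.closure S, ∀ z ∈ AddSubmonoid.closure S,
      y + z = x → y = 0 ∨ z = 0) : x ∈ S := by
  induction hx using AddSubmonoid.closure_induction with
  | mem x hx => exact hx
  | zero => exact absurd rfl hx0
  | add y z hy hz ihy ihz =>
    rcases hindec y hy z hz rfl with rfl | rfl
    · rw [zero_add] at hx0 hindec ⊢
      exact ihz hx0 hindec
    · rw [add_zero] at hx0 hindec ⊢
      exact ihy hx0 hindec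

theorem LinearIndependent.eq_or_eq_of_add_eq_add {ι R M : Type*} [Semiring R] [CharZero R]
    [AddCommMonoid M] [Module R M] {b : ι → M} (hb : LinearIndependent R b) {i j k l : ι}
    (h : b i + b j = b k + b l) : i = k ∨ i = l := by
  classical
  have hcoeff := hb (a₁ := Finsupp.single i 1 + Finsupp.single j 1)
    (a₂ := Finsupp.single k 1 + Finsupp.single l 1) (by simpa using h)
  by_contra! hne
  have := DFunLike.congr_fun hcoeff i
  simp only [Finsupp.add_apply, Finsupp.single_apply, if_neg hne.1.symm,
    if_neg hne.2.symm] at this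
  split_ifs at this <;> norm_num at this

namespace Toric

local notation "F" => fiberProd Zp2 Zp2 Zp1 phiSum phiSum

theorem mem_fiberProd_phiSum {p : (Fin 2 → ℤ) × (Fin 2 → ℤ)} :
    p ∈ F ↔ (∀ i, 0 ≤ p.1 i) ∧ (∀ i, 0 ≤ p.2 i) ∧ p.1 0 + p.1 1 = p.2 0 + p.2 1 :=
  ⟨fun ⟨h₁, h₂, he⟩ => ⟨h₁, h₂, congrArg Subtype.val he⟩,
    fun ⟨h₁, h₂, he⟩ => ⟨h₁, h₂, Subtype.ext he⟩⟩

def deg : (Fin 2 → ℤ) × (Fin 2 → ℤ) →+ ℤ :=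
  AddMonoidHom.mk' (fun p => p.1 0 + p.1 1) fun p q => by
    simp only [Prod.fst_add, Pi.add_apply]; ring

theorem deg_nonneg {p} (hp : p ∈ F) : 0 ≤ deg p :=
  have h₁ := (mem_fiberProd_phiSum.1 hp).1
  add_nonneg (h₁ 0) (h₁ 1)

theorem eq_zero_of_deg_eq_zero {p} (hp : p ∈ F) (h : deg p = 0) : p = 0 := by
  obtain ⟨h₁, h₂, he⟩ := mem_fiberProd_phiSum.1 hp
  have := h₁ 0; have := h₁ 1; have := h₂ 0; have := h₂ 1
  change p.1 0 + p.1 1 = 0 at h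
  exact Prod.ext (funext <| Fin.forall_fin_two.2 ⟨by simp; omega, by simp; omega⟩)
    (funext <| Fin.forall_fin_two.2 ⟨by simp; omega, by simp; omega⟩)

def atom (ij : Fin 2 × Fin 2) : (Fin 2 → ℤ) × (Fin 2 → ℤ) := (Pi.single ij.1 1, Pi.single ij.2 1)

theorem atom_injective : Function.Injective atom := by
  decide

theorem atom_mem (ij : Fin 2 × Fin 2) : atom ij ∈ F := by
  rw [mem_fiberProd_phiSum]
  fin_cases ij <;> decide

theorem deg_atom (ij : Fin 2 × Fin 2) : deg (atom ij) = 1 := by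
  fin_cases ij <;> decide

theorem atom_ne_zero (ij : Fin 2 × Fin 2) : atom ij ≠ 0 := by
  fin_cases ij <;> decide

theorem atom_add_atom : atom (0, 0) + atom (1, 1) = atom (0, 1) + atom (1, 0) := by
  decide

theorem atom_indecomposable (ij : Fin 2 × Fin 2) :
    ∀ y ∈ F, ∀ z ∈ F, y + z = atom ij → y = 0 ∨ z = 0 := by
  rintro y hy z hz h
  have hdeg : deg y + deg z = 1 := by rw [← map_add, h, deg_atom]
  have := deg_nonneg hy
  have := deg_nonneg hz
  rcases (by omega : deg y = 0 ∨ deg z = 0) with hy0 | hz0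
  · exact .inl (eq_zero_of_deg_eq_zero hy hy0)
  · exact .inr (eq_zero_of_deg_eq_zero hz hz0)

theorem exists_sub_atom_mem {p} (hp : p ∈ F) (hp0 : p ≠ 0) : ∃ ij, p - atom ij ∈ F := by
  have hdeg : deg p ≠ 0 := fun h => hp0 (eq_zero_of_deg_eq_zero hp h)
  obtain ⟨h₁, h₂, he⟩ := mem_fiberProd_phiSum.1 hp
  change p.1 0 + p.1 1 ≠ 0 at hdeg
  have := h₁ 0; have := h₁ 1; have := h₂ 0; have := h₂ 1
  obtain ⟨i, hi⟩ : ∃ i, 1 ≤ p.1 i := by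
    by_contra! h
    have := h 0; have := h 1; omega
  obtain ⟨j, hj⟩ : ∃ j, 1 ≤ p.2 j := by
    by_contra! h
    have := h 0; have := h 1; omega
  refine ⟨(i, j), mem_fiberProd_phiSum.2 ?_⟩
  fin_cases i <;> fin_cases j <;>
    simp only [atom, Prod.fst_sub, Prod.snd_sub, Pi.sub_apply, Fin.forall_fin_two,
      Pi.single_eq_same, Pi.single_eq_of_ne, ne_eq, one_ne_zero, zero_ne_one, not_false_eq_true,
      sub_zero, Fin.isValue, Fin.zero_eta, Fin.mk_one] at hi hj ⊢ <;> omega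

theorem fiberProd_phiSum_eq_closure : F = AddSubmonoid.closure (Set.range atom) := by
  refine le_antisymm (fun p hp => ?_)
    (AddSubmonoid.closure_le.2 (Set.range_subset_iff.2 atom_mem))
  induction h : (deg p).toNat generalizing p with
  | zero =>
    rw [eq_zero_of_deg_eq_zero hp (by have := deg_nonneg hp; omega)]
    exact zero_mem _
  | succ n ih =>
    have hp0 : p ≠ 0 := by rintro rfl; simp at h
    obtain ⟨ij, hsub⟩ := exists_sub_atom_mem hp hp0
    have hrest := ih (p - atom ij) hsub (by rw [map_sub, deg_atom]; omega)
    simpa using add_mem hrest (AddSubmonoid.subset_closure (Set.mem_range_self ij))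

theorem isToric_fiberProd_phiSum : IsToric F where
  fg := (AddSubmonoid.fg_iff _).2 ⟨_, fiberProd_phiSum_eq_closure.symm, Set.finite_range atom⟩
  sharp v hv hnv := by
    have := deg_nonneg hv
    have := deg_nonneg hnv
    rw [map_neg] at this
    exact eq_zero_of_deg_eq_zero hv (by omega)
  saturated v _ k hk hkv := by
    have hk' : (0 : ℤ) < k := by exact_mod_cast hk
    have hcoord (i) : (k • v).1 i = k * v.1 i ∧ (k • v).2 i = k * v.2 i := by simp
    obtain ⟨h₁, h₂, he⟩ := mem_fiberProd_phiSum.1 hkv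
    simp only [hcoord, ← mul_add] at h₁ h₂ he
    exact mem_fiberProd_phiSum.2 ⟨fun i => nonneg_of_mul_nonneg_right (h₁ i) hk',
      fun i => nonneg_of_mul_nonneg_right (h₂ i) hk', mul_left_cancel₀ hk'.ne' he⟩

/-- The fiber product of the two smooth monoids `ℤ≥0²` over
`ℤ≥0` along `(m,n) ↦ m + n` is a toric monoid which is not smooth (not
freely generated). -/
theorem fiberProd_not_smooth :
    IsToric (fiberProd Zp2 Zp2 Zp1 phiSum phiSum) ∧
    ¬ IsSmooth (fiberProd Zp2 Zp2 Zp1 phiSum phiSum) := by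
  refine ⟨isToric_fiberProd_phiSum, fun ⟨k, b, hb, hF⟩ => ?_⟩
  have atom_mem_range (ij) : atom ij ∈ Set.range b :=
    AddSubmonoid.mem_of_mem_closure_of_indecomposable (hF ▸ atom_mem ij) (atom_ne_zero ij)
      (hF ▸ atom_indecomposable ij)
  obtain ⟨i₀₀, h₀₀⟩ := atom_mem_range (0, 0)
  obtain ⟨i₁₁, h₁₁⟩ := atom_mem_range (1, 1)
  obtain ⟨i₀₁, h₀₁⟩ := atom_mem_range (0, 1)
  obtain ⟨i₁₀, h₁₀⟩ := atom_mem_range (1, 0)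
  have hrel : b i₀₀ + b i₁₁ = b i₀₁ + b i₁₀ := by
    rw [h₀₀, h₁₁, h₀₁, h₁₀, atom_add_atom]
  rcases hb.eq_or_eq_of_add_eq_add hrel with rfl | rfl
  · exact absurd (atom_injective (h₀₀.symm.trans h₀₁)) (by decide)
  · exact absurd (atom_injective (h₀₀.symm.trans h₁₀)) (by decide)

end Toric
end
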